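/- AKSZ cohomological vector field on a cotangent-type target: let g be a finite-dimensional Lie algebra with invariant pairing, and on the graded space N = g[1] ⊕ g*[1] with coordinates (a, b) and symplectic form ω = d(b da) of degree 1, define the Hamiltonian H(a,b) = ⟨b, ½[a,a]⟩ + (Λ/6)⟨b³⟩ (the second term defined when g = so(2,1) ≅ Λ²V and b ∈ V, with ⟨b³⟩ = ε_{abc} b^a b^b b^c). Then the Hamiltonian vector field Q of H satisfies Q² = 0, i.e. {H, H} = 0 for the induced Poisson bracket. -/
import Mathlib


/-!
STATEMENT 10: AKSZ target for 3D BF (super)gravity: on N = g[1] ⊕ g*[1] with odd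
coordinates (a, b), symplectic form of degree 1 and Hamiltonian
  H = ⟨b, ½[a,a]⟩ + (Λ/6)⟨b³⟩
(the cubic term defined for g = so(2,1) ≅ Λ²V via the totally antisymmetric ε),
the Hamiltonian vector field Q of H satisfies Q² = 0, i.e. {H, H} = 0.
We formalize the finite-dimensional target directly: functions on N form the
exterior (Grassmann) algebra on the odd coordinates a¹,a²,a³,b₁,b₂,b₃; with
f i j k = ⟨eᵢ, [eⱼ, eₖ]⟩ the structure constants of so(2,1) contracted with the
invariant pairing η = diag(−1,1,1) (so that f is totally antisymmetric — this is
the invariance of the pairing and, for the cosmological term, the total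
antisymmetry of ε — and satisfies the Jacobi identity), the odd Poisson bracket
{·,·} induced by ω is given by ∑ᵢ ∂_{bᵢ}F ∂_{aᵢ}G + ∂_{aᵢ}F ∂_{bᵢ}G, and the
classical master equation {H, H} = 0 holds.
-/

noncomputable section
open ExteriorAlgebra

/-- Functions on the target N = g[1] ⊕ g*[1]: the Grassmann algebra on six odd
coordinates a¹,a²,a³ (first three) and b₁,b₂,b₃ (last three). -/
abbrev TargetFns := ExteriorAlgebra ℝ (Fin 6 → ℝ)

/-- The odd coordinate functions. -/
def θ (i : Fin 6) : TargetFns := ExteriorAlgebra.ι ℝ (Pi.single i 1)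

def aCoord (i : Fin 3) : TargetFns := θ (Fin.castAdd 3 i)
def bCoord (i : Fin 3) : TargetFns := θ (Fin.natAdd 3 i)

/-- Odd derivative ∂/∂aⁱ (contraction with the dual coordinate). -/
def da (i : Fin 3) : TargetFns →ₗ[ℝ] TargetFns :=
  CliffordAlgebra.contractLeft (LinearMap.proj (Fin.castAdd 3 i))

/-- Odd derivative ∂/∂bᵢ. -/
def db (i : Fin 3) : TargetFns →ₗ[ℝ] TargetFns :=
  CliffordAlgebra.contractLeft (LinearMap.proj (Fin.natAdd 3 i))

/-- The odd Poisson bracket induced by the degree-1 symplectic form ω = d(b da). -/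
def pbr (F G : TargetFns) : TargetFns :=
  ∑ i : Fin 3, ((db i F) * (da i G) + (da i F) * (db i G))

/-- The AKSZ Hamiltonian H = ⟨b, ½[a,a]⟩ + (Λ/6)⟨b³⟩ in coordinates. -/
def aksz_H (f : Fin 3 → Fin 3 → Fin 3 → ℝ) (Λ : ℝ) : TargetFns :=
  ∑ i : Fin 3, ∑ j : Fin 3, ∑ k : Fin 3,
    (((1 : ℝ)/2 * f i j k) • (bCoord i * aCoord j * aCoord k)
      + (Λ/6 * f i j k) • (bCoord i * bCoord j * bCoord k))


/-- auxiliary lemmas -/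
lemma theta_sq (i : Fin 6) : θ i * θ i = 0 := ι_sq_zero _

lemma theta_swap (i j : Fin 6) : θ i * θ j = -(θ j * θ i) := by
  have := ExteriorAlgebra.ι_add_mul_swap (R := ℝ) (M := Fin 6 → ℝ)
    (Pi.single i 1) (Pi.single j 1)
  unfold θ; linear_combination (norm := noncomm_ring) this

lemma sq_mul (i : Fin 6) (x : TargetFns) : θ i * (θ i * x) = 0 := by
  rw [← mul_assoc, theta_sq, zero_mul]

lemma z1 (i j k : Fin 6) : θ i * (θ j * (θ i * θ k)) = 0 := by
  calc θ i * (θ j * (θ i * θ k)) = θ i * ((θ j * θ i) * θ k) := by rw [mul_assoc]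
  _ = -(θ i * (θ i * (θ j * θ k))) := by rw [theta_swap j i]; noncomm_ring
  _ = 0 := by rw [sq_mul, neg_zero]

lemma z2 (i j k : Fin 6) : θ i * (θ j * (θ k * θ i)) = 0 := by
  rw [theta_swap k i]
  calc θ i * (θ j * -(θ i * θ k)) = -(θ i * (θ j * (θ i * θ k))) := by noncomm_ring
  _ = 0 := by rw [z1, neg_zero]

lemma z3 (i j k : Fin 6) : θ j * (θ i * (θ i * θ k)) = 0 := by
  rw [sq_mul, mul_zero]

lemma z4 (i j k : Fin 6) : θ j * (θ i * (θ k * θ i)) = 0 := by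
  rw [theta_swap k i]
  calc θ j * (θ i * -(θ i * θ k)) = -(θ j * (θ i * (θ i * θ k))) := by noncomm_ring
  _ = 0 := by rw [z3, neg_zero]

lemma d_theta (d : Module.Dual ℝ (Fin 6 → ℝ)) (j : Fin 6) :
    CliffordAlgebra.contractLeft d (θ j) = algebraMap ℝ TargetFns (d (Pi.single j 1)) :=
  CliffordAlgebra.contractLeft_ι _ _ _

lemma d_mul (d : Module.Dual ℝ (Fin 6 → ℝ)) (j : Fin 6) (x : TargetFns) :
    CliffordAlgebra.contractLeft d (θ j * x)
      = d (Pi.single j 1) • x - θ j * CliffordAlgebra.contractLeft d x :=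
  CliffordAlgebra.contractLeft_ι_mul _ _ _

lemma ca0 : aCoord 0 = θ 0 := rfl
lemma ca1 : aCoord 1 = θ 1 := rfl
lemma ca2 : aCoord 2 = θ 2 := rfl
lemma cb0 : bCoord 0 = θ 3 := rfl
lemma cb1 : bCoord 1 = θ 4 := rfl
lemma cb2 : bCoord 2 = θ 5 := rfl
lemma hda0 : da 0 = CliffordAlgebra.contractLeft (LinearMap.proj (0:Fin 6)) := rfl
lemma hda1 : da 1 = CliffordAlgebra.contractLeft (LinearMap.proj (1:Fin 6)) := rfl
lemma hda2 : da 2 = CliffordAlgebra.contractLeft (LinearMap.proj (2:Fin 6)) := rfl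
lemma hdb0 : db 0 = CliffordAlgebra.contractLeft (LinearMap.proj (3:Fin 6)) := rfl
lemma hdb1 : db 1 = CliffordAlgebra.contractLeft (LinearMap.proj (4:Fin 6)) := rfl
lemma hdb2 : db 2 = CliffordAlgebra.contractLeft (LinearMap.proj (5:Fin 6)) := rfl

set_option maxHeartbeats 4000000 in
theorem aksz_classical_master_equation
    (f : Fin 3 → Fin 3 → Fin 3 → ℝ) (Λ : ℝ)
    (η : Fin 3 → ℝ) (hη : η = ![-1, 1, 1])
    -- total antisymmetry of f = ⟨·,[·,·]⟩ (invariance of the pairing, ε antisymmetric):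
    (hskew₁ : ∀ i j k, f i j k = -f j i k)
    (hskew₂ : ∀ i j k, f i j k = -f i k j)
    -- the Jacobi identity for g in structure-constant form:
    (hjac : ∀ i j k p, ∑ m : Fin 3,
      η m * (f m i j * f p m k + f m j k * f p m i + f m k i * f p m j) = 0) :
    pbr (aksz_H f Λ) (aksz_H f Λ) = 0 := by
  have hz1 : ∀ i k, f i i k = 0 := fun i k => by linarith [hskew₁ i i k]
  have hz2 : ∀ i j, f i j j = 0 := fun i j => by linarith [hskew₂ i j j]
  have hz3 : ∀ i j, f i j i = 0 := fun i j => by linarith [hskew₂ i j i, hz1 i j]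
  have h021 : f 0 2 1 = -f 0 1 2 := by linarith [hskew₂ 0 1 2]
  have h102 : f 1 0 2 = -f 0 1 2 := by linarith [hskew₁ 0 1 2]
  have h120 : f 1 2 0 = f 0 1 2 := by linarith [hskew₂ 1 0 2, h102]
  have h201 : f 2 0 1 = f 0 1 2 := by linarith [hskew₁ 0 2 1, h021]
  have h210 : f 2 1 0 = -f 0 1 2 := by linarith [hskew₂ 2 0 1, h201]
  simp only [pbr, aksz_H, Fin.sum_univ_three, hz1, hz2, hz3, h021, h102, h120, h201, h210,
    mul_zero, zero_smul, zero_add, add_zero, mul_neg, neg_smul,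
    ca0, ca1, ca2, cb0, cb1, cb2, mul_assoc]
  simp only [hda0, hda1, hda2, hdb0, hdb1, hdb2, map_add, map_smul, map_neg,
    d_mul, d_theta, LinearMap.proj_apply, Pi.single_apply, Fin.reduceEq, reduceIte,
    map_zero, map_one, zero_smul, one_smul, smul_zero, mul_zero, zero_mul, mul_one,
    sub_zero, zero_sub, add_zero, zero_add, neg_neg, mul_neg, neg_mul]
  simp [mul_sub, sub_mul, smul_sub, mul_smul_comm, smul_mul_assoc, mul_add, add_mul,
    smul_smul, smul_add, mul_assoc, z1, z2, z3, z4, sq_mul, theta_sq]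


end
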